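/- arXiv:2410.04385 — 3 statements merged into one kernel-verified Lean document; each statement's English description precedes it below -/
import Mathlib

section
/- Let d ≥ 1, let n : Fin d → ℕ be mode sizes, and let r, s : Fin (d+1) → ℕ be rank sequences with r 0 = r d = s 0 = s d = 1. Suppose Y is the TT tensor with cores Y_k, i.e., Y(i_1,…,i_d) is the unique entry of the 1×1 matrix Y_1(i_1) · Y_2(i_2) ⋯ Y_d(i_d), where each slice Y_k(i_k) is a real (r_{k-1}) × (r_k) matrix; similarly Z is the TT tensor with cores Z_k having slices Z_k(i_k) ∈ ℝ^{s_{k-1} × s_k}. Then for every multi-index (i_1,…,i_d), the product Y(i_1,…,i_d) · Z(i_1,…,i_d) equals the unique entry of the 1×1 matrix (Y_1(i_1) ⊗ Z_1(i_1)) · (Y_2(i_2) ⊗ Z_2(i_2)) ⋯ (Y_d(i_d) ⊗ Z_d(i_d)). In other words, the Hadamard (elementwise) product of two TT tensors is the TT tensor whose k-th core has slices Y_k(i_k) ⊗ Z_k(i_k). -/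
open Matrix Kronecker

/-- Ordered product of the slices of a chain of TT cores: for a multi-index
`idx = (i_0, …, i_{e-1})`, `ttProd ι μ X e idx = X 0 (i_0) * X 1 (i_1) * ⋯ * X (e-1) (i_{e-1})`,
where `X k (i_k)` is a matrix indexed by `ι k × ι (k+1)`. -/
noncomputable def ttProd (ι : ℕ → Type) [∀ k, Fintype (ι k)] [∀ k, DecidableEq (ι k)]
    (μ : ℕ → Type) (X : ∀ k : ℕ, μ k → Matrix (ι k) (ι (k + 1)) ℝ) :
    (e : ℕ) → (∀ j : Fin e, μ j.val) → Matrix (ι 0) (ι e) ℝ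
  | 0, _ => 1
  | e + 1, idx => ttProd ι μ X e (fun j => idx j.castSucc) * X e (idx (Fin.last e))

lemma ttProd_kron (n r s : ℕ → ℕ)
    (Ycore : ∀ k : ℕ, Fin (n k) → Matrix (Fin (r k)) (Fin (r (k + 1))) ℝ)
    (Zcore : ∀ k : ℕ, Fin (n k) → Matrix (Fin (s k)) (Fin (s (k + 1))) ℝ) :
    ∀ e idx,
      ttProd (fun k => Fin (r k) × Fin (s k)) (fun k => Fin (n k))
          (fun k i => Ycore k i ⊗ₖ Zcore k i) e idx =
        (ttProd (fun k => Fin (r k)) (fun k => Fin (n k)) Ycore e idx) ⊗ₖ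
          (ttProd (fun k => Fin (s k)) (fun k => Fin (n k)) Zcore e idx) := by
  intro e
  induction e with
  | zero => intro idx; simp [ttProd, Matrix.one_kronecker_one]
  | succ e ih =>
      intro idx
      simp only [ttProd, ih, Matrix.mul_kronecker_mul]

/-- The Hadamard (elementwise) product of two TT tensors is the TT tensor whose `k`-th core
has slices `Y_k(i_k) ⊗ Z_k(i_k)` (Kronecker products of the corresponding slices). -/
theorem hadamard_tt (d : ℕ) (hd : 1 ≤ d) (n r s : ℕ → ℕ)
    (hr0 : r 0 = 1) (hrd : r d = 1) (hs0 : s 0 = 1) (hsd : s d = 1)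
    (Ycore : ∀ k : ℕ, Fin (n k) → Matrix (Fin (r k)) (Fin (r (k + 1))) ℝ)
    (Zcore : ∀ k : ℕ, Fin (n k) → Matrix (Fin (s k)) (Fin (s (k + 1))) ℝ)
    (Y Z : (∀ j : Fin d, Fin (n j.val)) → ℝ)
    (hY : ∀ idx a b, Y idx = ttProd (fun k => Fin (r k)) (fun k => Fin (n k)) Ycore d idx a b)
    (hZ : ∀ idx a b, Z idx = ttProd (fun k => Fin (s k)) (fun k => Fin (n k)) Zcore d idx a b) :
    ∀ idx a b,
      Y idx * Z idx =
        ttProd (fun k => Fin (r k) × Fin (s k)) (fun k => Fin (n k))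
          (fun k i => Ycore k i ⊗ₖ Zcore k i) d idx a b := by
  intro idx a b
  rw [ttProd_kron, hY idx a.1 b.1, hZ idx a.2 b.2]
  rfl
end

section
/- Let d ≥ 1 and n : Fin d → ℕ. Suppose X, W : (Π k, Fin (n k)) → ℝ are tensors admitting TT decompositions with rank sequences {r_k}_{k=0}^{d} and {s_k}_{k=0}^{d}, respectively (with r_0 = r_d = s_0 = s_d = 1). Then the Hadamard product tensor A, defined by A(i_1,…,i_d) = X(i_1,…,i_d) · W(i_1,…,i_d), admits a TT decomposition with rank sequence {r_k · s_k}_{k=0}^{d}: that is, there exist families of matrices A_k(i_k) ∈ ℝ^{(r_{k-1} s_{k-1}) × (r_k s_k)} such that A(i_1,…,i_d) is the unique entry of the 1×1 matrix A_1(i_1) · A_2(i_2) ⋯ A_d(i_d) for every multi-index. -/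
open Matrix

open Kronecker in
/-- If `X` and `W` admit TT decompositions with rank sequences `{r_k}` and `{s_k}`
(with boundary ranks equal to `1`), then their Hadamard (elementwise) product `A`
admits a TT decomposition with rank sequence `{r_k · s_k}`. -/
theorem hadamard_tt_ranks (d : ℕ) (hd : 1 ≤ d) (n r s : ℕ → ℕ)
    (hr0 : r 0 = 1) (hrd : r d = 1) (hs0 : s 0 = 1) (hsd : s d = 1)
    (X W A : (∀ j : Fin d, Fin (n j.val)) → ℝ)
    (hX : ∃ Xcore : ∀ k : ℕ, Fin (n k) → Matrix (Fin (r k)) (Fin (r (k + 1))) ℝ,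
      ∀ idx a b, X idx = ttProd (fun k => Fin (r k)) (fun k => Fin (n k)) Xcore d idx a b)
    (hW : ∃ Wcore : ∀ k : ℕ, Fin (n k) → Matrix (Fin (s k)) (Fin (s (k + 1))) ℝ,
      ∀ idx a b, W idx = ttProd (fun k => Fin (s k)) (fun k => Fin (n k)) Wcore d idx a b)
    (hA : ∀ idx, A idx = X idx * W idx) :
    ∃ Acore : ∀ k : ℕ, Fin (n k) → Matrix (Fin (r k * s k)) (Fin (r (k + 1) * s (k + 1))) ℝ,
      ∀ idx a b,
        A idx = ttProd (fun k => Fin (r k * s k)) (fun k => Fin (n k)) Acore d idx a b := by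
  obtain ⟨Xc, hXc⟩ := hX
  obtain ⟨Wc, hWc⟩ := hW
  refine ⟨fun k i => Matrix.reindex finProdFinEquiv finProdFinEquiv (Xc k i ⊗ₖ Wc k i), ?_⟩
  have key : ∀ e (idx : ∀ j : Fin e, Fin (n j.val)),
      ttProd (fun k => Fin (r k * s k)) (fun k => Fin (n k))
        (fun k i => Matrix.reindex finProdFinEquiv finProdFinEquiv (Xc k i ⊗ₖ Wc k i)) e idx
      = Matrix.reindex finProdFinEquiv finProdFinEquiv
          ((ttProd (fun k => Fin (r k)) (fun k => Fin (n k)) Xc e idx) ⊗ₖ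
           (ttProd (fun k => Fin (s k)) (fun k => Fin (n k)) Wc e idx)) := by
    intro e
    induction e with
    | zero =>
      intro idx
      simp [ttProd, Matrix.one_kronecker_one, Matrix.reindex_apply, Matrix.submatrix_one_equiv]
    | succ e ih =>
      intro idx
      simp only [ttProd]
      rw [ih, Matrix.mul_kronecker_mul]
      simp [Matrix.reindex_apply, Matrix.submatrix_mul_equiv]
  intro idx a b
  rw [hA, key, Matrix.reindex_apply, Matrix.submatrix_apply, Matrix.kroneckerMap_apply,
    hXc idx (finProdFinEquiv.symm a).1 (finProdFinEquiv.symm b).1,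
    hWc idx (finProdFinEquiv.symm a).2 (finProdFinEquiv.symm b).2]
end

section
/- Let n, r, r', s, s', ℓ, ℓ', t ∈ ℕ. For each i ∈ Fin n let Y(i) ∈ ℝ^{r × r'}, Z(i) ∈ ℝ^{s × s'}, and R(i) ∈ ℝ^{ℓ × ℓ'} be real matrices, let U be a matrix with rows indexed by Fin r' × Fin s' and t columns, let σ : Fin t → ℝ, let S = diag(σ), and let V ∈ ℝ^{ℓ' × t}. For each γ ∈ Fin t define U_γ ∈ ℝ^{s' × r'} by U_γ(β', α') = U((α', β'), γ). Define W_L as the matrix with rows indexed by Fin r × Fin s and columns indexed by Fin n × Fin t with W_L((α,β), (i,γ)) = [Z(i) · U_γ · (Y(i))ᵀ](β, α), define W_R as the matrix with ℓ rows and columns indexed by Fin n × Fin t with W_R(δ, (i,γ)) = [R(i) · V(:,γ)](δ), and let D be the diagonal matrix on index set Fin n × Fin t with D((i,γ),(i,γ)) = σ_γ (i.e., D = I_n ⊗ S). Then W_L · D · W_Rᵀ = Σ_{i ∈ Fin n} (Y(i) ⊗ Z(i)) · (U S Vᵀ) · (R(i))ᵀ. -/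
open Matrix Kronecker

/-- Matrix form of the Hadamard-avoiding partial contraction: with
`W_L((α,β),(i,γ)) = [Z(i) U_γ Y(i)ᵀ](β,α)`, `W_R(δ,(i,γ)) = [R(i) V(:,γ)](δ)`, and
`D = I_n ⊗ S` the block-diagonal matrix with entry `σ_γ` at `((i,γ),(i,γ))`, one has
`W_L · D · W_Rᵀ = ∑_i (Y(i) ⊗ Z(i)) · (U S Vᵀ) · (R(i))ᵀ`. -/
theorem hadamard_avoiding_matrix_form (n r r' s s' l l' t : ℕ)
    (Y : Fin n → Matrix (Fin r) (Fin r') ℝ)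
    (Z : Fin n → Matrix (Fin s) (Fin s') ℝ)
    (R : Fin n → Matrix (Fin l) (Fin l') ℝ)
    (U : Matrix (Fin r' × Fin s') (Fin t) ℝ)
    (σ : Fin t → ℝ) (V : Matrix (Fin l') (Fin t) ℝ)
    (Ufold : Fin t → Matrix (Fin s') (Fin r') ℝ)
    (hU : ∀ (γ : Fin t) (β' : Fin s') (α' : Fin r'), Ufold γ β' α' = U (α', β') γ)
    (WL : Matrix (Fin r × Fin s) (Fin n × Fin t) ℝ)
    (hWL : ∀ (α : Fin r) (β : Fin s) (i : Fin n) (γ : Fin t),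
      WL (α, β) (i, γ) = (Z i * Ufold γ * (Y i)ᵀ) β α)
    (WR : Matrix (Fin l) (Fin n × Fin t) ℝ)
    (hWR : ∀ (δ : Fin l) (i : Fin n) (γ : Fin t),
      WR δ (i, γ) = (R i).mulVec (fun δ' => V δ' γ) δ)
    (D : Matrix (Fin n × Fin t) (Fin n × Fin t) ℝ)
    (hD : D = Matrix.diagonal (fun p : Fin n × Fin t => σ p.2)) :
    WL * D * WRᵀ =
      ∑ i : Fin n, (Y i ⊗ₖ Z i) * (U * Matrix.diagonal σ * Vᵀ) * (R i)ᵀ := by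
  subst hD
  ext ⟨α, β⟩ δ
  conv_lhs => rw [Matrix.mul_apply]
  simp only [Matrix.mul_diagonal, Matrix.transpose_apply, Matrix.sum_apply, Matrix.mul_apply,
    Matrix.kroneckerMap_apply, Fintype.sum_prod_type, hWL, hWR, Matrix.mulVec, dotProduct, hU,
    Finset.sum_mul, Finset.mul_sum]
  simp only [Matrix.diagonal_apply, Prod.mk.injEq, ite_and, mul_ite, ite_mul, mul_zero,
    zero_mul, Finset.sum_ite_irrel, Finset.sum_const_zero, Finset.sum_ite_eq, Finset.sum_ite_eq', Finset.mem_univ,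
    if_true]
  refine Finset.sum_congr rfl fun i _ => ?_
  rw [Finset.sum_comm]
  refine Finset.sum_congr rfl fun d _ => ?_
  rw [Finset.sum_comm]
  refine Finset.sum_congr rfl fun a _ => ?_
  rw [Finset.sum_comm]
  refine Finset.sum_congr rfl fun b _ => ?_
  refine Finset.sum_congr rfl fun g _ => ?_
  ring
end
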